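/- In the Game of Notification, truthful notification is incentive-compatible for Bob: if Bob shares Alice's secret with Carol (collaborative context) and signals s=1, he earns 6, versus 4 if he signals 0; if he keeps the secret and signals 0, he earns 4 versus 0 if he signals 1; hence Bob's best strategy always signals truthfully whether he shared the secret. -/

import Mathlib

inductive ACh | T | M | B
  deriving DecidableEq
instance instFintypeACh : Fintype ACh :=
  ⟨{.T, .M, .B}, fun x => by cases x <;> simp⟩
inductive BCh | N | I | F
  deriving DecidableEq
instance instFintypeBCh : Fintype BCh :=
  ⟨{.N, .I, .F}, fun x => by cases x <;> simp⟩
inductive CCh | L | Cc | R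
  deriving DecidableEq
instance instFintypeCCh : Fintype CCh :=
  ⟨{.L, .Cc, .R}, fun x => by cases x <;> simp⟩

def gACa : ACh → CCh → ℚ
  | .T, .L => 4
  | .T, .Cc => 0
  | .T, .R => -8
  | .M, .L => 2
  | .M, .Cc => 1
  | .M, .R => 2
  | .B, .L => -8
  | .B, .Cc => 0
  | .B, .R => 4

def gACc : ACh → CCh → ℚ
  | .T, .L => -8
  | .T, .Cc => 0
  | .T, .R => -8
  | .M, .L => 0
  | .M, .Cc => 0
  | .M, .R => 0
  | .B, .L => -8
  | .B, .Cc => 0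
  | .B, .R => -8

def gABa : ACh → BCh → ℚ
  | .T, .N => 4
  | .T, .I => 0
  | .T, .F => -8
  | .M, .N => 1
  | .M, .I => 1
  | .M, .F => 1
  | .B, .N => -8
  | .B, .I => 0
  | .B, .F => 4

def gABb : ACh → BCh → ℚ
  | .T, .N => 4
  | .T, .I => 0
  | .T, .F => -8
  | .M, .N => 0
  | .M, .I => 0
  | .M, .F => 0
  | .B, .N => -8
  | .B, .I => 0
  | .B, .F => 4

def gBCb : BCh → CCh → ℚ
  | .N, .L => -6
  | .N, .Cc => 0
  | .N, .R => 6
  | .I, .L => 0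
  | .I, .Cc => 0
  | .I, .R => 0
  | .F, .L => 6
  | .F, .Cc => 0
  | .F, .R => -6

def gBCc : BCh → CCh → ℚ
  | .N, .L => -6
  | .N, .Cc => 0
  | .N, .R => 6
  | .I, .L => 0
  | .I, .Cc => 0
  | .I, .R => 0
  | .F, .L => 6
  | .F, .Cc => 0
  | .F, .R => -6

def uA (x : ACh) (y : BCh) (z : CCh) : ℚ := gACa x z + gABa x y
def uB (x : ACh) (y : BCh) (z : CCh) : ℚ := gABb x y + gBCb y z
def uC (x : ACh) (y : BCh) (z : CCh) : ℚ := gACc x z + gBCc y z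

def EU (u : ACh → BCh → CCh → ℚ)
    (sA : Bool → ACh) (sB : Bool → BCh) (sC : Bool → CCh) : ℚ :=
  (∑ a : Bool, u (sA a) (sB a) (sC a)) / 2

def Nash (sA : Bool → ACh) (sB : Bool → BCh) (sC : Bool → CCh) : Prop :=
  (∀ sA', EU uA sA' sB sC ≤ EU uA sA sB sC) ∧
  (∀ sB', EU uB sA sB' sC ≤ EU uB sA sB sC) ∧
  (∀ sC', EU uC sA sB sC' ≤ EU uC sA sB sC)

/-- Bob's payoff when he shares and truthfully signals 1: equilibrium (M, a?N:F, a?R:L). -/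
def shareSig1 : ℚ :=
  EU uB (fun _ => .M) (fun a => if a then .N else .F) (fun a => if a then .R else .L)
/-- Bob's payoff when he shares but signals 0: equilibrium (a?T:B, a?N:F, C). -/
def shareSig0 : ℚ :=
  EU uB (fun a => if a then .T else .B) (fun a => if a then .N else .F) (fun _ => .Cc)
/-- Bob's payoff when he keeps the secret and signals 0: equilibrium (a?T:B, a?N:F, C). -/
def keepSig0 : ℚ :=
  EU uB (fun a => if a then .T else .B) (fun a => if a then .N else .F) (fun _ => .Cc)
/-- Bob's payoff when he keeps the secret but signals 1: equilibrium (M,I,C). -/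
def keepSig1 : ℚ :=
  EU uB (fun _ => .M) (fun _ => .I) (fun _ => .Cc)

def bobPay : Bool → Bool → ℚ := fun shared sig =>
  if shared then (if sig then shareSig1 else shareSig0)
  else (if sig then keepSig1 else keepSig0)

lemma EU_eq (u : ACh → BCh → CCh → ℚ) (sA : Bool → ACh) (sB : Bool → BCh) (sC : Bool → CCh) :
    EU u sA sB sC =
      (u (sA false) (sB false) (sC false) + u (sA true) (sB true) (sC true)) / 2 := by
  rw [EU, Fintype.sum_bool, add_comm]

lemma shareSig1_eq : shareSig1 = 6 := by
  norm_num [shareSig1, EU_eq, uB, gABb, gBCb]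

lemma shareSig0_eq : shareSig0 = 4 := by
  norm_num [shareSig0, EU_eq, uB, gABb, gBCb]

lemma keepSig0_eq : keepSig0 = 4 :=
  shareSig0_eq

lemma keepSig1_eq : keepSig1 = 0 := by
  norm_num [keepSig1, EU_eq, uB, gABb, gBCb]

lemma bobPay_le_bobPay_self (shared sig : Bool) : bobPay shared sig ≤ bobPay shared shared := by
  cases shared <;> cases sig <;>
    norm_num [bobPay, shareSig1_eq, shareSig0_eq, keepSig0_eq, keepSig1_eq]

/-- Truthful notification is incentive-compatible for Bob: sharing with signal 1 earns
6 versus 4 for signal 0; keeping with signal 0 earns 4 versus 0 for signal 1; hence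
signalling truthfully whether he shared is Bob's best strategy. -/
theorem notification_incentive_compatible :
    shareSig1 = 6 ∧ shareSig0 = 4 ∧ keepSig0 = 4 ∧ keepSig1 = 0 ∧
    (∀ shared sig : Bool, bobPay shared sig ≤ bobPay shared shared) :=
  ⟨shareSig1_eq, shareSig0_eq, keepSig0_eq, keepSig1_eq, bobPay_le_bobPay_self⟩
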